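/- Let p = (47 - 3√41)/216, and define |Υ⟩ = sqrt((1-3p)/(3-3p))·|00⟩ + sqrt(1/(3-3p))·(|S⟩ + |11⟩) ∈ Sym²(ℂ²), with |S⟩ = (|01⟩+|10⟩)/√2, and W_j = (S_ph⊗S_ph)^j for j = 0,1,2,3 where S_ph = diag(1, i). Then the operators K_j := ((3-3p)/4)·W_j|Υ⟩⟨Υ|W_j† for j = 0,...,3, K₄ := 3p·|00⟩⟨00|, and K₅ := P₂^A (the projector onto the antisymmetric subspace) are positive semidefinite and sum to the identity on ℂ²⊗ℂ², i.e., they form a POVM. -/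

import Mathlib

open Matrix
open scoped ComplexOrder

noncomputable def p : ℝ := (47 - 3*Real.sqrt 41)/216

/-- `|Υ⟩ = √((1-3p)/(3-3p))|00⟩ + √(1/(3-3p))(|S⟩ + |11⟩)` in the computational basis. -/
noncomputable def Υ : Fin 2 × Fin 2 → ℂ :=
  fun v =>
    if v = (0, 0) then (Real.sqrt ((1 - 3*p)/(3 - 3*p)) : ℝ)
    else if v = (1, 1) then (Real.sqrt (1/(3 - 3*p)) : ℝ)
    else ((Real.sqrt (1/(3 - 3*p)) / Real.sqrt 2 : ℝ) : ℂ)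

/-- The phase gate `S = diag(1, i)`. -/
noncomputable def Sph : Matrix (Fin 2) (Fin 2) ℂ := !![1, 0; 0, Complex.I]

/-- `S ⊗ S`. -/
noncomputable def W : Matrix (Fin 2 × Fin 2) (Fin 2 × Fin 2) ℂ :=
  fun v w => Sph v.1 w.1 * Sph v.2 w.2

/-- `|Υ⟩⟨Υ|`. -/
noncomputable def outerΥ : Matrix (Fin 2 × Fin 2) (Fin 2 × Fin 2) ℂ :=
  fun v w => Υ v * (starRingEnd ℂ) (Υ w)

/-- `K_j = ((3-3p)/4) W^j |Υ⟩⟨Υ| (W^j)†` for `j = 0,…,3`. -/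
noncomputable def Ku (j : ℕ) : Matrix (Fin 2 × Fin 2) (Fin 2 × Fin 2) ℂ :=
  (((3 - 3*p)/4 : ℝ) : ℂ) • (W^j * outerΥ * (W^j)ᴴ)

/-- `K₄ = 3p |00⟩⟨00|`. -/
noncomputable def K4 : Matrix (Fin 2 × Fin 2) (Fin 2 × Fin 2) ℂ :=
  ((3*p : ℝ) : ℂ) •
    (Matrix.of fun v w : Fin 2 × Fin 2 => if v = (0, 0) ∧ w = (0, 0) then (1 : ℂ) else 0)

/-- The singlet `|A⟩ = (|01⟩ - |10⟩)/√2`. -/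
noncomputable def singlet : Fin 2 × Fin 2 → ℂ :=
  fun v => if v = (0, 1) then ((1/Real.sqrt 2 : ℝ) : ℂ)
    else if v = (1, 0) then -((1/Real.sqrt 2 : ℝ) : ℂ) else 0

/-- `K₅ = P₂^A = |A⟩⟨A|`. -/
noncomputable def K5 : Matrix (Fin 2 × Fin 2) (Fin 2 × Fin 2) ℂ :=
  fun v w => singlet v * (starRingEnd ℂ) (singlet w)

noncomputable def K : Fin 6 → Matrix (Fin 2 × Fin 2) (Fin 2 × Fin 2) ℂ :=
  ![Ku 0, Ku 1, Ku 2, Ku 3, K4, K5]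

/-!
`W = diag(1, i, i, -1)`, with phase `i ^ (Hamming weight)`, generates a cyclic group of
order 4, and averaging `W^j |Υ⟩⟨Υ| W^j†` over it erases the entries of `|Υ⟩⟨Υ|` between
basis vectors of different weight. What is left, scaled by `3 - 3p`, is
`(1 - 3p)|00⟩⟨00| + |S⟩⟨S| + |11⟩⟨11|`; adding `K₄` and `K₅` gives the identity because
`|S⟩⟨S| + |A⟩⟨A|` is the projector onto `span{|01⟩, |10⟩}`. Positivity holds since
`0 < 3p < 1` makes every `K_j` a nonnegative multiple of some `|ψ⟩⟨ψ|`.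
-/

theorem sum_range_diagonal_pow_mul_mul_conjTranspose_apply {n : Type*} [Fintype n]
    [DecidableEq n] {m : ℕ} (hm : m ≠ 0) {d : n → ℂ} (hd : ∀ i, d i ^ m = 1)
    (A : Matrix n n ℂ) (i j : n) :
    (∑ k ∈ Finset.range m, diagonal d ^ k * A * (diagonal d ^ k)ᴴ) i j =
      if d i = d j then m * A i j else 0 := by
  have hdj : d j ≠ 0 := by rintro h; simpa [h, zero_pow hm] using hd j
  have hstar : star (d j) = (d j)⁻¹ :=
    (Complex.inv_eq_conj (Complex.norm_eq_one_of_pow_eq_one (hd j) hm)).symm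
  have hentry (k : ℕ) :
      (diagonal d ^ k * A * (diagonal d ^ k)ᴴ) i j = (d i / d j) ^ k * A i j := by
    simp only [diagonal_pow, diagonal_conjTranspose, star_pow, mul_diagonal, diagonal_mul,
      Pi.pow_apply, Pi.star_apply, hstar, inv_pow, div_eq_mul_inv]
    ring
  simp only [Matrix.sum_apply, hentry, ← Finset.sum_mul]
  split_ifs with h
  · simp [h, hdj]
  · have hne : d i / d j ≠ 1 := by rwa [Ne, div_eq_one_iff_eq hdj]
    rw [geom_sum_eq hne, div_pow, hd, hd, div_one, sub_self, zero_div, zero_mul]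

lemma p_pos : 0 < p := by
  have h : Real.sqrt 41 < 47 / 3 := by
    rw [Real.sqrt_lt' (by norm_num)]; norm_num
  unfold p; linarith

lemma three_mul_p_lt_one : 3 * p < 1 := by
  have h : 0 ≤ Real.sqrt 41 := Real.sqrt_nonneg 41
  unfold p; linarith

lemma Ku_posSemidef (j : ℕ) : (Ku j).PosSemidef := by
  have hc : (0 : ℂ) ≤ (((3 - 3 * p) / 4 : ℝ) : ℂ) :=
    Complex.zero_le_real.mpr (by linarith [three_mul_p_lt_one])
  exact ((posSemidef_vecMulVec_self_star Υ).mul_mul_conjTranspose_same (W ^ j)).smul hc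

lemma K4_posSemidef : K4.PosSemidef := by
  have hdiag : (Matrix.of fun v w : Fin 2 × Fin 2 =>
      if v = (0, 0) ∧ w = (0, 0) then (1 : ℂ) else 0) = diagonal (Pi.single (0, 0) 1) := by
    ext v w
    simp only [of_apply, diagonal_apply, Pi.single_apply]
    split_ifs <;> simp_all
  rw [K4, hdiag]
  exact (PosSemidef.diagonal (Pi.single_nonneg.mpr zero_le_one)).smul
    (Complex.zero_le_real.mpr (by linarith [p_pos]))

lemma K_posSemidef (j : Fin 6) : (K j).PosSemidef := by
  fin_cases j
  exacts [Ku_posSemidef 0, Ku_posSemidef 1, Ku_posSemidef 2, Ku_posSemidef 3, K4_posSemidef,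
    posSemidef_vecMulVec_self_star singlet]

lemma W_eq_diagonal : W = diagonal fun v => Complex.I ^ (v.1.val + v.2.val) := by
  ext ⟨a, b⟩ ⟨c, e⟩
  fin_cases a <;> fin_cases b <;> fin_cases c <;> fin_cases e <;> simp [W, Sph, pow_succ]

lemma sum_range_four_Ku_apply (v w : Fin 2 × Fin 2) :
    (∑ j ∈ Finset.range 4, Ku j) v w =
      if v.1.val + v.2.val = w.1.val + w.2.val then
        ((3 - 3 * p : ℝ) : ℂ) * Υ v * starRingEnd ℂ (Υ w) else 0 := by
  have hphase (u : Fin 2 × Fin 2) : (Complex.I ^ (u.1.val + u.2.val)) ^ 4 = 1 := by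
    rw [← pow_mul, mul_comm, pow_mul, Complex.I_pow_four, one_pow]
  have hinj : Complex.I ^ (v.1.val + v.2.val) = Complex.I ^ (w.1.val + w.2.val) ↔
      v.1.val + v.2.val = w.1.val + w.2.val :=
    ⟨fun h => Complex.isPrimitiveRoot_I.pow_inj (by omega) (by omega) h, fun h => h ▸ rfl⟩
  simp only [Ku, W_eq_diagonal]
  rw [← Finset.smul_sum, Matrix.smul_apply,
    sum_range_diagonal_pow_mul_mul_conjTranspose_apply four_ne_zero hphase]
  simp only [hinj]
  split_ifs
  · simp only [outerΥ, smul_eq_mul]; push_cast; ring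
  · exact smul_zero _

lemma sum_K_eq : ∑ j : Fin 6, K j = ∑ j ∈ Finset.range 4, Ku j + K4 + K5 := by
  simp [K, Fin.sum_univ_six, Finset.sum_range_succ]

lemma sum_K_eq_one : ∑ j : Fin 6, K j = 1 := by
  have hq : 0 < 3 - 3 * p := by linarith [three_mul_p_lt_one, p_pos]
  have h00 :
      (3 - 3 * p : ℂ) * (Real.sqrt ((1 - 3 * p) / (3 - 3 * p)) : ℂ) ^ 2 = 1 - 3 * p := by
    rw [← Complex.ofReal_pow, Real.sq_sqrt (div_nonneg (by linarith [three_mul_p_lt_one]) hq.le)]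
    exact_mod_cast mul_div_cancel₀ _ hq.ne'
  have h11 : (3 - 3 * p : ℂ) * (Real.sqrt (3 - 3 * p) : ℂ)⁻¹ ^ 2 = 1 := by
    rw [inv_pow, ← Complex.ofReal_pow, Real.sq_sqrt hq.le]
    exact_mod_cast mul_inv_cancel₀ hq.ne'
  have hsqrt2 : (Real.sqrt 2 : ℂ)⁻¹ ^ 2 = 1 / 2 := by
    rw [inv_pow, ← Complex.ofReal_pow, Real.sq_sqrt zero_le_two, one_div]
    norm_num
  rw [sum_K_eq]
  ext ⟨a, b⟩ ⟨c, e⟩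
  simp only [Matrix.add_apply, sum_range_four_Ku_apply]
  fin_cases a <;> fin_cases b <;> fin_cases c <;> fin_cases e <;>
    simp [Υ, singlet, K4, K5, one_apply, Prod.ext_iff]
  -- left: the entries at `(00, 00)`, in the `{01, 10}` block, and at `(11, 11)`
  · linear_combination h00
  · linear_combination (Real.sqrt 2 : ℂ)⁻¹ ^ 2 * h11 + 2 * hsqrt2
  · linear_combination (Real.sqrt 2 : ℂ)⁻¹ ^ 2 * h11
  · linear_combination (Real.sqrt 2 : ℂ)⁻¹ ^ 2 * h11
  · linear_combination (Real.sqrt 2 : ℂ)⁻¹ ^ 2 * h11 + 2 * hsqrt2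
  · linear_combination h11

theorem stmt12 :
    (∀ j : Fin 6, (K j).PosSemidef) ∧
    (∑ j : Fin 6, K j = (1 : Matrix (Fin 2 × Fin 2) (Fin 2 × Fin 2) ℂ)) :=
  ⟨K_posSemidef, sum_K_eq_one⟩
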